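/- For every natural number n, the polynomial identity g_n(y) = ((1+y)^((n-1)/2) / 2) · [ (√(1+y)+√y)^(n+1) + (√(1+y)−√y)^(n+1) ] holds, where g_n(y) = ∑_{p=0}^{n} OCPS(n+1, p+1) y^p with OCPS(n+1, p+1) = ∑_{k=0}^{p} (-1)^{p-k} C(p, k) C(n+2k, 2k). Equivalently, for all real y ≥ 0 the two sides agree as real numbers. -/

import Mathlib

open Finset Real

/-- `OCPS' n p = OCPS(n+1, p+1)`, the number of order-consecutive partition sequences
of `{1, …, n+1}` into `p+1` parts. -/
def OCPS' (n p : ℕ) : ℤ :=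
  ∑ k ∈ Finset.range (p + 1),
    (-1 : ℤ) ^ (p - k) * (p.choose k : ℤ) * ((n + 2 * k).choose (2 * k) : ℤ)

lemma neg_one_pow_sub' (p k : ℕ) (h : k ≤ p) : ((-1:ℤ))^(p-k) = (-1)^p * (-1)^k := by
  have h1 : (-1:ℤ)^p = (-1)^(p-k) * (-1)^k := by rw [← pow_add, Nat.sub_add_cancel h]
  have h2 : ((-1:ℤ))^k * (-1)^k = 1 := by
    rw [← pow_add, ← two_mul, pow_mul]; norm_num
  calc ((-1:ℤ))^(p-k) = (-1)^(p-k) * ((-1)^k * (-1)^k) := by rw [h2, mul_one]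
    _ = (-1)^p * (-1)^k := by rw [← mul_assoc, ← h1]

lemma choose_second_diff (m r : ℕ) :
    (m+2).choose (r+2) + m.choose (r+2) = 2 * ((m+1).choose (r+2)) + m.choose r := by
  have h1 : (m+2).choose (r+2) = (m+1).choose (r+1) + (m+1).choose (r+2) :=
    Nat.choose_succ_succ (m+1) (r+1)
  have h2 : (m+1).choose (r+1) = m.choose r + m.choose (r+1) := Nat.choose_succ_succ m r
  have h3 : (m+1).choose (r+2) = m.choose (r+1) + m.choose (r+2) := Nat.choose_succ_succ m (r+1)
  omega

lemma c_second_diff (n k : ℕ) :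
    ((n+2) + 2*(k+1)).choose (2*(k+1)) + (n + 2*(k+1)).choose (2*(k+1))
      = 2 * (((n+1) + 2*(k+1)).choose (2*(k+1))) + ((n+2) + 2*k).choose (2*k) := by
  have e2 : 2*(k+1) = 2*k + 2 := by omega
  rw [e2]
  have f1 : (n+2) + (2*k+2) = (n+2*k+2) + 2 := by omega
  have f2 : n + (2*k+2) = n+2*k+2 := by omega
  have f3 : (n+1) + (2*k+2) = (n+2*k+2) + 1 := by omega
  have f4 : (n+2) + 2*k = n+2*k+2 := by omega
  rw [f1, f2, f3, f4]
  exact choose_second_diff (n+2*k+2) (2*k)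

lemma bracket (n p : ℕ) :
    OCPS' (n+2) p - 2 * OCPS' (n+1) p + OCPS' n p
      = ∑ j ∈ Finset.range p,
          (-1:ℤ)^(p-(j+1)) * (p.choose (j+1) : ℤ) * (((n+2) + 2*j).choose (2*j) : ℤ) := by
  unfold OCPS'
  rw [Finset.mul_sum, ← Finset.sum_sub_distrib, ← Finset.sum_add_distrib,
    Finset.sum_range_succ']
  have h0 : ((-1:ℤ)^(p-0) * (p.choose 0 : ℤ) * (((n+2) + 2*0).choose (2*0) : ℤ))
      - 2 * ((-1:ℤ)^(p-0) * (p.choose 0 : ℤ) * (((n+1) + 2*0).choose (2*0) : ℤ))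
      + (-1:ℤ)^(p-0) * (p.choose 0 : ℤ) * ((n + 2*0).choose (2*0) : ℤ) = 0 := by
    simp
    ring
  rw [h0, add_zero]
  refine Finset.sum_congr rfl ?_
  intro j _
  have h := c_second_diff n j
  zify at h
  linear_combination ((-1:ℤ)^(p-(j+1)) * (p.choose (j+1) : ℤ)) * h

lemma ocps_rec (n p : ℕ) :
    OCPS' (n+2) (p+1)
      = 2 * OCPS' (n+1) (p+1) - OCPS' n (p+1) + (2 * OCPS' (n+1) p - OCPS' n p) := by
  have hA := bracket n (p+1)
  have hB := bracket n p
  have key : (∑ j ∈ Finset.range (p+1),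
        (-1:ℤ)^((p+1)-(j+1)) * ((p+1).choose (j+1) : ℤ) * (((n+2) + 2*j).choose (2*j) : ℤ))
      + (∑ j ∈ Finset.range p,
        (-1:ℤ)^(p-(j+1)) * (p.choose (j+1) : ℤ) * (((n+2) + 2*j).choose (2*j) : ℤ))
      = OCPS' (n+2) p := by
    unfold OCPS'
    rw [Finset.sum_range_succ, Finset.sum_range_succ (n := p)]
    have e1 : (-1:ℤ)^((p+1)-(p+1)) * ((p+1).choose (p+1) : ℤ)
        * (((n+2) + 2*p).choose (2*p) : ℤ)
        = (-1:ℤ)^(p-p) * (p.choose p : ℤ) * (((n+2) + 2*p).choose (2*p) : ℤ) := by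
      simp
    rw [e1, add_right_comm]
    congr 1
    rw [← Finset.sum_add_distrib]
    refine Finset.sum_congr rfl ?_
    intro j hj
    rw [Finset.mem_range] at hj
    have hd : (p+1) - (j+1) = (p - (j+1)) + 1 := by omega
    have hd2 : p - j = (p - (j+1)) + 1 := by omega
    have hp : (((p+1).choose (j+1) : ℤ)) = (p.choose j : ℤ) + (p.choose (j+1) : ℤ) := by
      exact_mod_cast Nat.choose_succ_succ p j
    rw [hd, hd2, pow_succ]
    linear_combination ((-1:ℤ)^(p-(j+1)) * (-1) * (((n+2) + 2*j).choose (2*j) : ℤ)) * hp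
  linarith [hA, hB, key]

lemma vanish0 (p : ℕ) (hp : 0 < p) : OCPS' 0 p = 0 := by
  have h : OCPS' 0 p = (-1:ℤ)^p * ∑ k ∈ Finset.range (p+1), (-1:ℤ)^k * (p.choose k : ℤ) := by
    unfold OCPS'
    rw [Finset.mul_sum]
    refine Finset.sum_congr rfl ?_
    intro k hk
    rw [Finset.mem_range] at hk
    rw [neg_one_pow_sub' p k (by omega)]
    simp [Nat.choose_self]
    ring
  rw [h, Int.alternating_sum_range_choose_of_ne (by omega), mul_zero]

lemma vanish1 (p : ℕ) (hp : 1 < p) : OCPS' 1 p = 0 := by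
  obtain ⟨q, rfl⟩ : ∃ q, p = q + 2 := ⟨p - 2, by omega⟩
  set p := q + 2 with hpdef
  have hS1 : (∑ k ∈ Finset.range (p+1), (-1:ℤ)^k * (p.choose k : ℤ)) = 0 :=
    Int.alternating_sum_range_choose_of_ne (by omega)
  have hS2 : (∑ k ∈ Finset.range (p+1), (-1:ℤ)^k * (p.choose k : ℤ) * k) = 0 := by
    rw [Finset.sum_range_succ']
    norm_num
    have e : ∀ j ∈ Finset.range p, (-1:ℤ)^(j+1) * (p.choose (j+1) : ℤ) * ((j:ℤ)+1)
        = -(((q:ℤ)+2) * ((-1:ℤ)^j * ((q+1).choose j : ℤ))) := by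
      intro j _
      have hm : (q+2) * ((q+1).choose j) = p.choose (j+1) * (j+1) := by
        exact_mod_cast Nat.add_one_mul_choose_eq (q+1) j
      have hm' : ((q:ℤ)+2) * (((q+1).choose j : ℤ)) = (p.choose (j+1) : ℤ) * ((j:ℤ)+1) := by
        exact_mod_cast hm
      rw [pow_succ]
      linear_combination ((-1:ℤ)^j) * hm'
    rw [Finset.sum_congr rfl e, Finset.sum_neg_distrib, ← Finset.mul_sum]
    have h0 : (∑ j ∈ Finset.range p, (-1:ℤ)^j * ((q+1).choose j : ℤ)) = 0 := by
      have := Int.alternating_sum_range_choose_of_ne (n := q+1) (by omega)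
      simpa using this
    simp [h0]
  have h : OCPS' 1 p = ∑ k ∈ Finset.range (p+1),
      ((-1:ℤ)^p * ((-1:ℤ)^k * (p.choose k : ℤ))
        + (-1:ℤ)^p * (2 * ((-1:ℤ)^k * (p.choose k : ℤ) * k))) := by
    unfold OCPS'
    refine Finset.sum_congr rfl ?_
    intro k hk
    rw [Finset.mem_range] at hk
    rw [neg_one_pow_sub' p k (by omega)]
    have hc : ((1 + 2*k).choose (2*k) : ℤ) = 2*(k:ℤ)+1 := by
      have h2 : (1 + 2*k).choose (2*k) = 2*k+1 := by
        rw [Nat.add_comm 1 (2*k)]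
        exact Nat.choose_succ_self_right (2*k)
      exact_mod_cast h2
    rw [hc]
    ring
  rw [h, Finset.sum_add_distrib, ← Finset.mul_sum, ← Finset.mul_sum, hS1]
  have : (∑ k ∈ Finset.range (p+1), 2 * ((-1:ℤ)^k * (p.choose k : ℤ) * k))
      = 2 * ∑ k ∈ Finset.range (p+1), (-1:ℤ)^k * (p.choose k : ℤ) * k := by
    rw [Finset.mul_sum]
  rw [this, hS2]
  ring

lemma ocps_vanish : ∀ n p : ℕ, n < p → OCPS' n p = 0 := by
  intro n
  induction n using Nat.twoStepInduction with
  | zero => exact fun p hp => vanish0 p hp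
  | one => exact fun p hp => vanish1 p hp
  | more n ih1 ih2 =>
    intro p hp
    obtain ⟨q, rfl⟩ : ∃ q, p = q + 1 := ⟨p - 1, by omega⟩
    rw [ocps_rec n q, ih2 (q+1) (by omega), ih2 q (by omega), ih1 (q+1) (by omega),
      ih1 q (by omega)]
    ring

lemma ocps_zero (n : ℕ) : OCPS' n 0 = 1 := by
  unfold OCPS'
  simp

lemma gsum_rec (n : ℕ) (y : ℝ) :
    (∑ p ∈ Finset.range (n+3), (OCPS' (n+2) p : ℝ) * y^p)
      = (1+y) * (2 * (∑ p ∈ Finset.range (n+2), (OCPS' (n+1) p : ℝ) * y^p)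
          - (∑ p ∈ Finset.range (n+1), (OCPS' n p : ℝ) * y^p)) := by
  have hpad : (∑ p ∈ Finset.range (n+1), (OCPS' n p : ℝ) * y^p)
      = ∑ p ∈ Finset.range (n+2), (OCPS' n p : ℝ) * y^p := by
    symm
    rw [Finset.sum_range_succ, ocps_vanish n (n+1) (by omega)]
    simp
  have hH : 2 * (∑ p ∈ Finset.range (n+2), (OCPS' (n+1) p : ℝ) * y^p)
        - (∑ p ∈ Finset.range (n+1), (OCPS' n p : ℝ) * y^p)
      = ∑ p ∈ Finset.range (n+2),
          (2*(OCPS' (n+1) p : ℝ) - (OCPS' n p : ℝ)) * y^p := by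
    rw [hpad, Finset.mul_sum, ← Finset.sum_sub_distrib]
    exact Finset.sum_congr rfl fun p _ => by ring
  rw [hH]
  have key : ∀ j ∈ Finset.range (n+2),
      (OCPS' (n+2) (j+1) : ℝ) * y^(j+1)
        = (2*(OCPS' (n+1) (j+1) : ℝ) - (OCPS' n (j+1) : ℝ)) * y^(j+1)
          + ((2*(OCPS' (n+1) j : ℝ) - (OCPS' n j : ℝ)) * y^j) * y := by
    intro j _
    have h := ocps_rec n j
    have h' : (OCPS' (n+2) (j+1) : ℝ)
        = 2*(OCPS' (n+1) (j+1) : ℝ) - (OCPS' n (j+1) : ℝ)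
          + (2*(OCPS' (n+1) j : ℝ) - (OCPS' n j : ℝ)) := by exact_mod_cast h
    rw [h']; ring
  rw [show n+3 = (n+2)+1 from rfl, Finset.sum_range_succ' _ (n+2)]
  rw [Finset.sum_congr rfl key, Finset.sum_add_distrib]
  have hsplit : (∑ j ∈ Finset.range (n+2),
        (2*(OCPS' (n+1) (j+1) : ℝ) - (OCPS' n (j+1) : ℝ)) * y^(j+1))
      = ∑ j ∈ Finset.range (n+1),
        (2*(OCPS' (n+1) (j+1) : ℝ) - (OCPS' n (j+1) : ℝ)) * y^(j+1) := by
    rw [Finset.sum_range_succ, ocps_vanish (n+1) (n+2) (by omega),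
      ocps_vanish n (n+2) (by omega)]
    simp
  rw [hsplit]
  rw [Finset.sum_range_succ' (fun p => (2*(OCPS' (n+1) p : ℝ) - (OCPS' n p : ℝ)) * y^p) (n+1)]
  rw [ocps_zero, ocps_zero (n+1), ocps_zero n]
  have hmul : (∑ j ∈ Finset.range (n+2),
        ((2*(OCPS' (n+1) j : ℝ) - (OCPS' n j : ℝ)) * y^j) * y)
      = (∑ j ∈ Finset.range (n+2), (2*(OCPS' (n+1) j : ℝ) - (OCPS' n j : ℝ)) * y^j) * y := by
    rw [Finset.sum_mul]
  rw [hmul]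
  rw [Finset.sum_range_succ' (fun p => (2*(OCPS' (n+1) p : ℝ) - (OCPS' n p : ℝ)) * y^p) (n+1)]
  rw [ocps_zero (n+1), ocps_zero n]
  push_cast
  ring

lemma rhs_rec (n : ℕ) (y : ℝ) (hy : 0 ≤ y) :
    (1+y) ^ (((n:ℝ)+1)/2) / 2 *
        ((Real.sqrt (1+y) + Real.sqrt y)^(n+3) + (Real.sqrt (1+y) - Real.sqrt y)^(n+3))
      = (1+y) * (2 * ((1+y) ^ (((n:ℝ))/2) / 2 *
          ((Real.sqrt (1+y) + Real.sqrt y)^(n+2) + (Real.sqrt (1+y) - Real.sqrt y)^(n+2)))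
        - (1+y) ^ (((n:ℝ)-1)/2) / 2 *
          ((Real.sqrt (1+y) + Real.sqrt y)^(n+1) + (Real.sqrt (1+y) - Real.sqrt y)^(n+1))) := by
  have h1y : (0:ℝ) < 1 + y := by linarith
  have hu : Real.sqrt (1+y) ^ 2 = 1 + y := Real.sq_sqrt (le_of_lt h1y)
  have hv : Real.sqrt y ^ 2 = y := Real.sq_sqrt hy
  have huv : Real.sqrt (1+y) ^ 2 - Real.sqrt y ^ 2 = 1 := by rw [hu, hv]; ring
  have hE1 : (1+y) ^ (((n:ℝ)+1)/2) = (1+y) * (1+y) ^ (((n:ℝ)-1)/2) := by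
    rw [show ((n:ℝ)+1)/2 = 1 + ((n:ℝ)-1)/2 by ring, Real.rpow_add h1y, Real.rpow_one]
  have hE2 : (1+y) ^ (((n:ℝ)+1)/2) * Real.sqrt (1+y) = (1+y) * (1+y) ^ ((n:ℝ)/2) := by
    rw [Real.sqrt_eq_rpow (1+y), ← Real.rpow_add h1y,
      show ((n:ℝ)+1)/2 + 1/2 = 1 + (n:ℝ)/2 by ring, Real.rpow_add h1y, Real.rpow_one]
  linear_combination
    ((Real.sqrt (1+y) + Real.sqrt y)^(n+2) + (Real.sqrt (1+y) - Real.sqrt y)^(n+2)) * hE2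
    - (((Real.sqrt (1+y) + Real.sqrt y)^(n+1) + (Real.sqrt (1+y) - Real.sqrt y)^(n+1))/2) * hE1
    - ((1+y) ^ (((n:ℝ)+1)/2)
        * ((Real.sqrt (1+y) + Real.sqrt y)^(n+1) + (Real.sqrt (1+y) - Real.sqrt y)^(n+1))/2) * huv

theorem generating_polynomial_closed_form (n : ℕ) (y : ℝ) (hy : 0 ≤ y) :
    (∑ p ∈ Finset.range (n + 1), (OCPS' n p : ℝ) * y ^ p) =
      (1 + y) ^ (((n : ℝ) - 1) / 2) / 2 *
        ((Real.sqrt (1 + y) + Real.sqrt y) ^ (n + 1)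
          + (Real.sqrt (1 + y) - Real.sqrt y) ^ (n + 1)) := by
  have h1y : (0:ℝ) < 1 + y := by linarith
  have hu : Real.sqrt (1+y) ^ 2 = 1 + y := Real.sq_sqrt (le_of_lt h1y)
  have hv : Real.sqrt y ^ 2 = y := Real.sq_sqrt hy
  induction n using Nat.twoStepInduction with
  | zero =>
    norm_num [Finset.sum_range_one, ocps_zero]
    have key : (1+y) ^ (-(1/2):ℝ) * (1+y) ^ ((1/2):ℝ) = 1 := by
      rw [← Real.rpow_add h1y]; norm_num
    have hs : Real.sqrt (1+y) = (1+y) ^ ((1/2):ℝ) := Real.sqrt_eq_rpow (1+y)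
    rw [hs]
    linear_combination (-1) * key
  | one =>
    have hO0 : OCPS' 1 0 = 1 := ocps_zero 1
    have hO1 : OCPS' 1 1 = 2 := by decide
    rw [Finset.sum_range_succ, Finset.sum_range_one, hO0, hO1]
    rw [show ((1:ℕ):ℝ) - 1 = 0 by norm_num, show (0:ℝ)/2 = 0 by norm_num, Real.rpow_zero]
    push_cast
    linear_combination (-1) * hu - hv
  | more n ih ih1 =>
    have e3 : n + 2 + 1 = n + 3 := rfl
    rw [e3, gsum_rec n y, ih1, ih]
    have ecast : ((n:ℝ)+2) - 1 = (n:ℝ) + 1 := by ring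
    have ecast1 : ((n:ℝ)+1) - 1 = (n:ℝ) := by ring
    push_cast
    rw [ecast, ecast1]
    rw [← rhs_rec n y hy]
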